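/- arXiv:2212.12563 — 8 statements merged into one kernel-verified Lean document; each statement's English description precedes it below -/
import Mathlib

section
/- Let G = ⟨ρ₀, …, ρ_{r−1}⟩ be a group generated by involutions and let G* = ⟨ρ₀τ^{δ₀ₖ}, …, ρ_{r−1}τ^{δ_{(r−1)k}}⟩ be the k-sesqui-extension of G with respect to an involution τ in a supergroup of G, where τ ∉ G and τ commutes with every ρᵢ. Then G* ≅ G or G* ≅ G × C₂, the latter occurring exactly when τ ∈ G*. -/
private lemma zpowers_two {K : Type*} [Group K] {τ : K} (hτ : orderOf τ = 2)
    {x : K} (hx : x ∈ Subgroup.zpowers τ) : x = 1 ∨ x = τ := by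
  obtain ⟨m, rfl⟩ := hx
  have h2 := zpow_mod_orderOf τ m
  rw [hτ] at h2
  rcases Int.emod_two_eq_zero_or_one m with h | h
  · left; show τ ^ m = 1
    rw [← h2]; norm_num [h]
  · right; show τ ^ m = τ
    rw [← h2]; norm_num [h]

private lemma key {K : Type*} [Group K] {r : ℕ} (ρ : Fin r → K) (τ : K) (k : Fin r)
    (hτ : orderOf τ = 2) (hc : ∀ x : K, Commute τ x)
    (G : Subgroup K) (hG : G = Subgroup.closure (Set.range ρ)) (hτG : τ ∉ G)
    (Gs : Subgroup K)
    (hGs : Gs = Subgroup.closure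
      (Set.range fun i => ρ i * τ ^ (if i = k then 1 else 0))) :
    (τ ∉ Gs ∧ Nonempty (Gs ≃* G)) ∨
      (τ ∈ Gs ∧ Nonempty (Gs ≃* G × Multiplicative (ZMod 2))) := by
  have hτ2 : τ ^ 2 = 1 := by rw [← hτ]; exact pow_orderOf_eq_one τ
  by_cases hmem : τ ∈ Gs
  · -- case τ ∈ Gs : Gs ≃* G × C₂
    right
    refine ⟨hmem, ?_⟩
    have hρS : ∀ i, ρ i ∈ Gs := by
      intro i
      have h1 : ρ i * τ ^ (if i = k then 1 else 0) ∈ Gs := by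
        rw [hGs]; exact Subgroup.subset_closure ⟨i, rfl⟩
      have h2 := mul_mem h1 (inv_mem (pow_mem hmem (if i = k then 1 else 0)))
      rwa [mul_inv_cancel_right] at h2
    have hGle : G ≤ Gs := by
      rw [hG]
      refine (Subgroup.closure_le _).mpr ?_
      rintro x ⟨i, rfl⟩
      exact hρS i
    have hGsup : Gs = G ⊔ Subgroup.zpowers τ := by
      apply le_antisymm
      · rw [hGs]
        refine (Subgroup.closure_le _).mpr ?_
        rintro x ⟨i, rfl⟩
        refine mul_mem (Subgroup.mem_sup_left ?_) (Subgroup.mem_sup_right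
          (pow_mem (Subgroup.mem_zpowers τ) _))
        rw [hG]; exact Subgroup.subset_closure ⟨i, rfl⟩
      · exact sup_le hGle ((Subgroup.zpowers_le).mpr hmem)
    have hpm : ∀ n : ℕ, τ ^ (n % 2) = τ ^ n := by
      intro n; rw [← hτ]; exact pow_mod_orderOf τ n
    let χ : Multiplicative (ZMod 2) →* K :=
    { toFun := fun t => τ ^ (Multiplicative.toAdd t).val
      map_one' := by simp
      map_mul' := by
        intro a b
        show τ ^ ((Multiplicative.toAdd a + Multiplicative.toAdd b).val) = _
        rw [ZMod.val_add, hpm, pow_add] }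
    have hcomm' : ∀ (g : G) (t : Multiplicative (ZMod 2)),
        Commute (G.subtype g) (χ t) := fun g t => ((hc (g : K)).symm).pow_right _
    let φ := MonoidHom.noncommCoprod G.subtype χ hcomm'
    have hφ : ∀ (g : G) (t : Multiplicative (ZMod 2)),
        φ (g, t) = (g : K) * τ ^ (Multiplicative.toAdd t).val := fun g t => rfl
    have hφrange : φ.range = Gs := by
      rw [hGsup]
      apply le_antisymm
      · rintro x ⟨⟨g, t⟩, rfl⟩
        rw [hφ]
        exact mul_mem (Subgroup.mem_sup_left g.2) (Subgroup.mem_sup_right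
          (pow_mem (Subgroup.mem_zpowers τ) _))
      · apply sup_le
        · intro g hg
          exact ⟨(⟨g, hg⟩, 1), by rw [hφ]; simp⟩
        · rw [Subgroup.zpowers_le]
          refine ⟨(1, Multiplicative.ofAdd 1), ?_⟩
          rw [hφ]
          simp [ZMod.val_one]
    have hφinj : Function.Injective φ := by
      rw [← MonoidHom.ker_eq_bot_iff, eq_bot_iff]
      rintro ⟨g, t⟩ hx
      have hx' : (g : K) * τ ^ (Multiplicative.toAdd t).val = 1 := hx
      have hval : (Multiplicative.toAdd t).val = 0 ∨
          (Multiplicative.toAdd t).val = 1 := by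
        have := ZMod.val_lt (Multiplicative.toAdd t)
        omega
      rcases hval with h | h
      · rw [h, pow_zero, mul_one] at hx'
        have ht : t = 1 := by
          have h0 : Multiplicative.toAdd t = 0 := by
            rwa [ZMod.val_eq_zero] at h
          have : Multiplicative.toAdd t = Multiplicative.toAdd 1 := by
            simpa using h0
          exact Multiplicative.toAdd.injective this
        rw [Subgroup.mem_bot, Prod.ext_iff]
        exact ⟨Subtype.ext hx', ht⟩
      · exfalso
        rw [h, pow_one] at hx'
        have hτg : τ = (g : K)⁻¹ := eq_inv_of_mul_eq_one_right hx'
        exact hτG (hτg ▸ inv_mem g.2)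
    exact ⟨(MulEquiv.subgroupCongr hφrange.symm).trans
      (MonoidHom.ofInjective hφinj).symm⟩
  · -- case τ ∉ Gs : Gs ≃* G
    left
    refine ⟨hmem, ?_⟩
    haveI hZ : (Subgroup.zpowers τ).Normal := by
      constructor
      intro n hn g
      obtain ⟨m, rfl⟩ := hn
      have hgm : g * τ ^ m * g⁻¹ = τ ^ m := by
        rw [← ((hc g).zpow_left m).eq, mul_inv_cancel_right]
      rw [hgm]
      exact ⟨m, rfl⟩
    set Z := Subgroup.zpowers τ with hZdef
    let q := QuotientGroup.mk' Z
    have hqτ : q τ = 1 := by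
      rw [QuotientGroup.mk'_apply, QuotientGroup.eq_one_iff]
      exact Subgroup.mem_zpowers τ
    have hker : ∀ (S : Subgroup K), τ ∉ S →
        Function.Injective (q.comp S.subtype) := by
      intro S hS
      rw [← MonoidHom.ker_eq_bot_iff, eq_bot_iff]
      intro x hx
      have hxZ : (x : K) ∈ Z := by
        have : q (x : K) = 1 := hx
        rwa [QuotientGroup.mk'_apply, QuotientGroup.eq_one_iff] at this
      rcases zpowers_two hτ hxZ with h | h
      · exact Subgroup.mem_bot.mpr (Subtype.ext h)
      · exact absurd (h ▸ x.2) hS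
    have hmaps : Subgroup.map q G = Subgroup.map q Gs := by
      rw [hG, hGs, MonoidHom.map_closure, MonoidHom.map_closure]
      congr 1
      rw [← Set.range_comp, ← Set.range_comp]
      refine congrArg Set.range (funext fun i => ?_)
      show q (ρ i) = q (ρ i * τ ^ (if i = k then 1 else 0))
      rw [map_mul, map_pow, hqτ, one_pow, mul_one]
    have hrange : (q.comp G.subtype).range = (q.comp Gs.subtype).range := by
      rw [MonoidHom.range_comp, MonoidHom.range_comp, Subgroup.range_subtype,
        Subgroup.range_subtype, hmaps]
    exact ⟨((MonoidHom.ofInjective (hker Gs hmem)).trans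
      (MulEquiv.subgroupCongr hrange.symm)).trans
      (MonoidHom.ofInjective (hker G hτG)).symm⟩

theorem sesqui_extension_dichotomy {H : Type*} [Group H] {r : ℕ}
    (ρ : Fin r → H) (τ : H) (k : Fin r)
    (hρ : ∀ i, ρ i ^ 2 = 1) (hτ : orderOf τ = 2)
    (hcomm : ∀ i, Commute τ (ρ i))
    (G : Subgroup H) (hG : G = Subgroup.closure (Set.range ρ))
    (hτG : τ ∉ G)
    (Gs : Subgroup H)
    (hGs : Gs = Subgroup.closure
      (Set.range fun i => ρ i * τ ^ (if i = k then 1 else 0))) :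
    (τ ∉ Gs ∧ Nonempty (Gs ≃* G)) ∨
      (τ ∈ Gs ∧ Nonempty (Gs ≃* G × Multiplicative (ZMod 2))) := by
  classical
  set S : Set H := insert τ (Set.range ρ) with hS
  set K : Subgroup H := Subgroup.closure S with hK
  have hτK : τ ∈ K := Subgroup.subset_closure (Set.mem_insert _ _)
  have hρK : ∀ i, ρ i ∈ K := fun i =>
    Subgroup.subset_closure (Set.mem_insert_of_mem _ ⟨i, rfl⟩)
  have hcK : ∀ y ∈ K, Commute τ y := by
    intro y hy
    induction hy using Subgroup.closure_induction with
    | mem x hx =>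
      rcases hx with rfl | ⟨i, rfl⟩
      · exact Commute.refl _
      · exact hcomm i
    | one => exact Commute.one_right τ
    | mul a b _ _ ha hb => exact ha.mul_right hb
    | inv a _ ha => exact ha.inv_right
  let tK : K := ⟨τ, hτK⟩
  let ρ' : Fin r → K := fun i => ⟨ρ i, hρK i⟩
  have htK2 : orderOf tK = 2 := by
    rw [← hτ]
    exact (orderOf_injective K.subtype K.subtype_injective tK).symm
  have hcentral : ∀ x : K, Commute tK x := by
    intro x
    exact Subtype.ext (hcK (x : H) x.2).eq
  have hmapG : Subgroup.map K.subtype (Subgroup.closure (Set.range ρ')) = G := by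
    rw [hG, MonoidHom.map_closure]
    congr 1
    rw [← Set.range_comp]
    exact congrArg Set.range (funext fun i => rfl)
  have hmapGs : Subgroup.map K.subtype
      (Subgroup.closure (Set.range fun i => ρ' i * tK ^ (if i = k then 1 else 0)))
      = Gs := by
    rw [hGs, MonoidHom.map_closure]
    congr 1
    rw [← Set.range_comp]
    exact congrArg Set.range (funext fun i => rfl)
  have hτGK : tK ∉ Subgroup.closure (Set.range ρ') := by
    intro h
    exact hτG (hmapG ▸ Subgroup.mem_map_of_mem K.subtype h)
  have hiso : Subgroup.closure (Set.range ρ') ≃* G :=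
    (Subgroup.equivMapOfInjective _ K.subtype K.subtype_injective).trans
      (MulEquiv.subgroupCongr hmapG)
  have hisos : Subgroup.closure
      (Set.range fun i => ρ' i * tK ^ (if i = k then 1 else 0)) ≃* Gs :=
    (Subgroup.equivMapOfInjective _ K.subtype K.subtype_injective).trans
      (MulEquiv.subgroupCongr hmapGs)
  have hmemiff : tK ∈ Subgroup.closure
      (Set.range fun i => ρ' i * tK ^ (if i = k then 1 else 0)) ↔ τ ∈ Gs := by
    constructor
    · intro h
      exact hmapGs ▸ Subgroup.mem_map_of_mem K.subtype h
    · intro h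
      rw [← hmapGs, Subgroup.mem_map] at h
      obtain ⟨x, hx, hxe⟩ := h
      have hxt : x = tK := Subtype.ext hxe
      exact hxt ▸ hx
  rcases key ρ' tK k htK2 hcentral _ rfl hτGK _ rfl with ⟨h1, ⟨e⟩⟩ | ⟨h1, ⟨e⟩⟩
  · exact Or.inl ⟨fun h => h1 (hmemiff.mpr h), ⟨(hisos.symm.trans e).trans hiso⟩⟩
  · exact Or.inr ⟨hmemiff.mp h1, ⟨(hisos.symm.trans e).trans
      (hiso.prodCongr (MulEquiv.refl _))⟩⟩
end

section
/- Let G = ⟨ρ₀, ρ₁⟩ be a permutation group on a finite set Ω where ρ₀, ρ₁ are involutions. If G has at least one orbit of size 3 and no orbit of size greater than 3, then G is isomorphic to S₃ (≅ D₆) or to C₂ × S₃ (≅ D₁₂). -/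
/-!
Write `π = ρ₀ρ₁`. Since `ρ₀πρ₀ = π⁻¹`, `G = ⟨π⟩ ∪ ρ₀⟨π⟩`, so `|G| ≤ 2·ord π`; and since every
orbit has at most three points, `π⁶` acts trivially, so `ord π ∣ 6`. On an orbit `O` of size 3,
`G` induces all of `Sym(O) ≅ S₃` (the image is transitive and contains an involution), and there
`π` is a product of two transpositions, so `π³` fixes `O` pointwise.

If `π³ = 1` then `|G| ≤ 6` and `G → Sym(O)` is an isomorphism. Otherwise `π³` moves some point,
whose orbit `O'` must then have size 2; now `|G| ≤ 12`, the kernel of `G → Sym(O)` is `{1, π³}`,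
and `G → Sym(O') × Sym(O) ≅ C₂ × S₃` is an isomorphism.
-/

open Equiv MulAction Subgroup
open scoped Pointwise

section TwoInvolutions

variable {H : Type*} [Group H] {a b : H}

theorem inv_eq_self_of_sq_eq_one (ha : a ^ 2 = 1) : a⁻¹ = a :=
  inv_eq_of_mul_eq_one_left (by rwa [← pow_two])

theorem closure_pair_subset_zpowers_union_smul (ha : a ^ 2 = 1) (hb : b ^ 2 = 1) :
    (closure {a, b} : Set H) ⊆ (zpowers (a * b) : Set H) ∪ a • (zpowers (a * b) : Set H) := by
  have step : ∀ x ∈ ({a, b} : Set H), ∀ y,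
      y ∈ zpowers (a * b) ∨ a * y ∈ zpowers (a * b) →
      x * y ∈ zpowers (a * b) ∨ a * (x * y) ∈ zpowers (a * b) := by
    rintro x (rfl | rfl) y (hy | hy)
    · right
      rwa [← mul_assoc, ← pow_two, ha, one_mul]
    · exact Or.inl hy
    · right
      rw [← mul_assoc]
      exact mul_mem (mem_zpowers _) hy
    · left
      have : x * y = (a * x)⁻¹ * (a * y) := by
        rw [mul_inv_rev, inv_eq_self_of_sq_eq_one ha, inv_eq_self_of_sq_eq_one hb, mul_assoc,
          ← mul_assoc a a, ← pow_two, ha, one_mul]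
      rw [this]
      exact mul_mem (inv_mem (mem_zpowers _)) hy
  intro g hg
  simp only [Set.mem_union, SetLike.mem_coe, Set.mem_smul_set_iff_inv_smul_mem, smul_eq_mul,
    inv_eq_self_of_sq_eq_one ha]
  induction hg using closure_induction_left with
  | one => exact Or.inl (one_mem _)
  | mul_left x hx y _ ih => exact step x hx y ih
  | inv_mul_cancel x hx y _ ih =>
    obtain rfl | rfl := hx
    · rw [inv_eq_self_of_sq_eq_one ha]
      exact step _ (.inl rfl) y ih
    · rw [inv_eq_self_of_sq_eq_one hb]
      exact step _ (.inr rfl) y ih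

theorem card_closure_pair_le_two_mul_orderOf [Finite H] (ha : a ^ 2 = 1) (hb : b ^ 2 = 1) :
    Nat.card (closure {a, b}) ≤ 2 * orderOf (a * b) := by
  have hZ : (zpowers (a * b) : Set H).ncard = orderOf (a * b) := by
    rw [← Nat.card_coe_set_eq, SetLike.coe_sort_coe, Nat.card_zpowers]
  calc Nat.card (closure {a, b})
      = (closure {a, b} : Set H).ncard := (Nat.card_coe_set_eq _).symm
    _ ≤ ((zpowers (a * b) : Set H) ∪ a • (zpowers (a * b) : Set H)).ncard :=
      Set.ncard_le_ncard (closure_pair_subset_zpowers_union_smul ha hb)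
    _ ≤ (zpowers (a * b) : Set H).ncard + (a • (zpowers (a * b) : Set H)).ncard :=
      Set.ncard_union_le _ _
    _ = 2 * orderOf (a * b) := by rw [Set.ncard_smul_set, hZ, two_mul]

end TwoInvolutions

theorem MonoidHom.bijective_prod_of_card_le_two_mul {G A B : Type*} [Group G] [Group A]
    [Group B] [Finite G] {f : G →* A} (hf : Function.Surjective f) (r : G →* B)
    (hB : Nat.card B = 2) (hG : Nat.card G ≤ 2 * Nat.card A) {z : G} (hfz : f z = 1)
    (hrz : r z ≠ 1) : Function.Bijective (r.prod f) := by
  have : Finite A := Finite.of_surjective f hf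
  have : Finite B := Nat.finite_of_card_ne_zero (by omega)
  have hA : 0 < Nat.card A := Nat.card_pos
  have hGker : Nat.card f.ker * Nat.card A = Nat.card G := by
    rw [← f.ker.card_mul_index, index_ker, MonoidHom.range_eq_top.mpr hf, card_top]
  have hz1 : z ≠ 1 := fun h => hrz (h ▸ map_one r)
  have hker : Nat.card f.ker = 2 := by
    have : 1 < Nat.card f.ker := (one_lt_card_iff_ne_bot _).mpr fun h =>
      hz1 (mem_bot.mp (h ▸ hfz : z ∈ (⊥ : Subgroup G)))
    nlinarith
  refine (Nat.bijective_iff_injective_and_card _).mpr ⟨?_, by rw [Nat.card_prod, hB]; nlinarith⟩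
  refine (injective_iff_map_eq_one _).mpr fun k hk => ?_
  obtain ⟨hrk, hfk⟩ := Prod.ext_iff.mp hk
  by_contra hk1
  have : 2 < (f.ker : Set G).ncard := (Set.two_lt_ncard_iff (Set.toFinite _)).mpr
    ⟨1, k, z, one_mem _, hfk, hfz, Ne.symm hk1, hz1.symm, fun h => hrz (h ▸ hrk)⟩
  rw [← Nat.card_coe_set_eq, SetLike.coe_sort_coe] at this
  omega

namespace Equiv.Perm

variable {X : Type*}

theorem nat_card_alternatingGroup_of_card_eq_three [Fintype X] [DecidableEq X]
    (hX : Nat.card X = 3) : Nat.card (alternatingGroup X) = 3 := by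
  have : Nontrivial X := Finite.one_lt_card_iff_nontrivial.mp (by omega)
  rw [nat_card_alternatingGroup, hX]
  rfl

theorem sign_eq_neg_one_of_sq_eq_one [Fintype X] [DecidableEq X] (hX : Nat.card X = 3)
    {c : Perm X} (hc : c ^ 2 = 1) (hc1 : c ≠ 1) : sign c = -1 := by
  refine (Int.units_eq_one_or _).resolve_left fun hsign => hc1 ?_
  have h3 : orderOf c ∣ 3 := nat_card_alternatingGroup_of_card_eq_three hX ▸
    (alternatingGroup X).orderOf_dvd_natCard (mem_alternatingGroup.mpr hsign)
  have h2 : orderOf c ∣ 2 := orderOf_dvd_of_pow_eq_one hc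
  exact orderOf_eq_one_iff.mp (Nat.dvd_one.mp (Nat.dvd_gcd h3 h2))

theorem eq_top_of_isPretransitive_of_two_dvd_card [Finite X] (hX : Nat.card X = 3)
    (T : Subgroup (Perm X)) [IsPretransitive T X] (hT : 2 ∣ Nat.card T) : T = ⊤ := by
  have : Nonempty X := (Nat.card_pos_iff.mp (by omega)).1
  have h3 : 3 ∣ Nat.card T := by
    rw [← hX, ← index_stabilizer_of_transitive T (Classical.arbitrary X)]
    exact index_dvd_card _
  have h6 : Nat.card (Perm X) = 6 := by rw [Nat.card_perm, hX]; rfl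
  refine T.eq_top_of_card_eq (Nat.dvd_antisymm T.card_subgroup_dvd_card ?_)
  rw [h6]
  exact Nat.Coprime.mul_dvd_of_dvd_of_dvd (by norm_num) hT h3

-- Both generators are nontrivial, hence odd, so `a * b` lies in `A₃`, of order 3.
theorem mul_pow_three_eq_one [Fintype X] [DecidableEq X] (hX : Nat.card X = 3)
    {a b : Perm X} (ha : a ^ 2 = 1) (hb : b ^ 2 = 1) (hab : closure {a, b} = ⊤) :
    (a * b) ^ 3 = 1 := by
  have h6 : 6 ≤ 2 * orderOf (a * b) := by
    have := card_closure_pair_le_two_mul_orderOf ha hb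
    rwa [hab, card_top, Nat.card_perm, hX] at this
  have ha1 : a ≠ 1 := by
    rintro rfl
    have := orderOf_le_of_pow_eq_one two_pos hb
    rw [one_mul] at h6
    omega
  have hb1 : b ≠ 1 := by
    rintro rfl
    have := orderOf_le_of_pow_eq_one two_pos ha
    rw [mul_one] at h6
    omega
  have hab_even : a * b ∈ alternatingGroup X := by
    rw [mem_alternatingGroup, sign_mul, sign_eq_neg_one_of_sq_eq_one hX ha ha1,
      sign_eq_neg_one_of_sq_eq_one hX hb hb1]
    rfl
  rw [← orderOf_dvd_iff_pow_eq_one, ← nat_card_alternatingGroup_of_card_eq_three hX]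
  exact (alternatingGroup X).orderOf_dvd_natCard hab_even

end Equiv.Perm

section TransitiveOnThree

variable {H X : Type*} [Group H] [MulAction H X] [IsPretransitive H X] [Finite X] {a b : H}

theorem toPermHom_surjective_of_card_eq_three (hX : Nat.card X = 3) (ha : a ^ 2 = 1)
    (hb : b ^ 2 = 1) (hab : closure {a, b} = ⊤) : Function.Surjective (toPermHom H X) := by
  set f := toPermHom H X
  have : IsPretransitive f.range X :=
    ⟨fun y z => let ⟨h, hh⟩ := exists_smul_eq H y z; ⟨⟨f h, h, rfl⟩, hh⟩⟩
  rw [← MonoidHom.range_eq_top]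
  refine Perm.eq_top_of_isPretransitive_of_two_dvd_card hX _ ?_
  obtain ⟨c, hc, hc1⟩ : ∃ c ∈ ({a, b} : Set H), f c ≠ 1 := by
    by_contra! h
    have hf : f = 1 := MonoidHom.eq_of_eqOn_dense hab h
    obtain ⟨y, z, hyz⟩ := (Finite.one_lt_card_iff_nontrivial.mp (by omega) : Nontrivial X)
    obtain ⟨g, rfl⟩ := exists_smul_eq H y z
    exact hyz (congr($hf g y)).symm
  have hc2 : c ^ 2 = 1 := by obtain rfl | rfl := hc <;> assumption
  have hord : orderOf (f c) = 2 := orderOf_eq_prime (by rw [← map_pow, hc2, map_one]) hc1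
  exact hord ▸ f.range.orderOf_dvd_natCard (MonoidHom.mem_range.mpr ⟨c, rfl⟩)

theorem toPermHom_mul_pow_three_eq_one (hX : Nat.card X = 3) (ha : a ^ 2 = 1) (hb : b ^ 2 = 1)
    (hab : closure {a, b} = ⊤) : toPermHom H X ((a * b) ^ 3) = 1 := by
  classical
  have : Fintype X := Fintype.ofFinite X
  have hgen : closure {toPermHom H X a, toPermHom H X b} = ⊤ := by
    rw [← Set.image_pair, ← MonoidHom.map_closure, hab, ← MonoidHom.range_eq_map,
      MonoidHom.range_eq_top]
    exact toPermHom_surjective_of_card_eq_three hX ha hb hab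
  rw [map_pow, map_mul]
  exact Perm.mul_pow_three_eq_one hX (by rw [← map_pow, ha, map_one])
    (by rw [← map_pow, hb, map_one]) hgen

end TransitiveOnThree

section OrbitsOfSizeAtMostThree

variable {H Ω : Type*} [Group H] [MulAction H Ω]

theorem smul_eq_self_of_toPermHom_orbit_eq_one {g : H} {x : Ω}
    (h : toPermHom H (orbit H x) g = 1) : g • x = x :=
  congr(($h ⟨x, mem_orbit_self x⟩ : Ω))

theorem pow_factorial_smul_eq_self [Finite Ω] {n : ℕ} (h : ∀ x : Ω, Nat.card (orbit H x) ≤ n)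
    (g : H) (x : Ω) : g ^ n.factorial • x = x := by
  refine smul_eq_self_of_toPermHom_orbit_eq_one ?_
  rw [map_pow, ← orderOf_dvd_iff_pow_eq_one]
  exact (_root_.orderOf_dvd_natCard _).trans
    (by rw [Nat.card_perm]; exact Nat.factorial_dvd_factorial (h x))

variable [Finite Ω] [Finite H] {a b : H}

theorem nonempty_mulEquiv_perm_fin_three (ha : a ^ 2 = 1) (hb : b ^ 2 = 1)
    (hab : closure {a, b} = ⊤) {x₀ : Ω} (hx₀ : Nat.card (orbit H x₀) = 3)
    (h3 : (a * b) ^ 3 = 1) : Nonempty (H ≃* Perm (Fin 3)) := by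
  set f := toPermHom H (orbit H x₀)
  have hf : Function.Surjective f := toPermHom_surjective_of_card_eq_three hx₀ ha hb hab
  have hO₀ : Nat.card (Perm (orbit H x₀)) = 6 := by rw [Nat.card_perm, hx₀]; rfl
  have hcard : Nat.card H ≤ Nat.card (Perm (orbit H x₀)) := by
    have hH := card_closure_pair_le_two_mul_orderOf ha hb
    have hord := orderOf_le_of_pow_eq_one (by norm_num) h3
    rw [hab, card_top] at hH
    omega
  have hbij : Function.Bijective f := (Nat.bijective_iff_surjective_and_card _).mpr
    ⟨hf, le_antisymm hcard (Nat.card_le_card_of_surjective _ hf)⟩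
  exact ⟨(MulEquiv.ofBijective f hbij).trans (permCongrHom (Finite.equivFinOfCardEq hx₀))⟩

theorem nonempty_mulEquiv_prod_perm_fin_three [FaithfulSMul H Ω]
    (hle : ∀ x : Ω, Nat.card (orbit H x) ≤ 3) (ha : a ^ 2 = 1) (hb : b ^ 2 = 1)
    (hab : closure {a, b} = ⊤) {x₀ : Ω} (hx₀ : Nat.card (orbit H x₀) = 3)
    (h3 : (a * b) ^ 3 ≠ 1) : Nonempty (H ≃* Multiplicative (ZMod 2) × Perm (Fin 3)) := by
  have h6 : (a * b) ^ 6 = 1 := eq_of_smul_eq_smul fun x =>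
    (pow_factorial_smul_eq_self hle (a * b) x).trans (one_smul H x).symm
  have hord : orderOf (a * b) ≤ 6 := Nat.le_of_dvd (by norm_num) (orderOf_dvd_of_pow_eq_one h6)
  have hcard := card_closure_pair_le_two_mul_orderOf ha hb
  rw [hab, card_top] at hcard
  obtain ⟨x₁, hx₁⟩ : ∃ x : Ω, (a * b) ^ 3 • x ≠ x := by
    by_contra! h
    exact h3 (eq_of_smul_eq_smul fun x => by rw [h, one_smul])
  set r := toPermHom H (orbit H x₁)
  have hrz : r ((a * b) ^ 3) ≠ 1 := fun h => hx₁ (smul_eq_self_of_toPermHom_orbit_eq_one h)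
  have hO₁ : Nat.card (orbit H x₁) = 2 := by
    have hne : Nat.card (orbit H x₁) ≠ 3 := fun h =>
      hrz (toPermHom_mul_pow_three_eq_one h ha hb hab)
    have hgt : 1 < Nat.card (orbit H x₁) := by
      rw [Nat.card_coe_set_eq, Set.one_lt_ncard_iff]
      exact ⟨_, _, mem_orbit_self x₁, mem_orbit _ _, hx₁.symm⟩
    have := hle x₁
    omega
  have hr : Nat.card (Perm (orbit H x₁)) = 2 := by rw [Nat.card_perm, hO₁]; rfl
  have hO₀ : Nat.card (Perm (orbit H x₀)) = 6 := by rw [Nat.card_perm, hx₀]; rfl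
  have hbij := MonoidHom.bijective_prod_of_card_le_two_mul
    (toPermHom_surjective_of_card_eq_three hx₀ ha hb hab) r hr (by omega)
    (toPermHom_mul_pow_three_eq_one hx₀ ha hb hab) hrz
  exact ⟨(MulEquiv.ofBijective _ hbij).trans ((mulEquivOfPrimeCardEq hr (by simp)).prodCongr
    (permCongrHom (Finite.equivFinOfCardEq hx₀)))⟩

end OrbitsOfSizeAtMostThree

theorem dihedral_orbits_le_three {Ω : Type*} [Fintype Ω]
    (ρ₀ ρ₁ : Equiv.Perm Ω)
    (h0 : ρ₀ ^ 2 = 1) (h1 : ρ₁ ^ 2 = 1)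
    (G : Subgroup (Equiv.Perm Ω)) (hG : G = Subgroup.closure {ρ₀, ρ₁})
    (horb3 : ∃ x : Ω, Nat.card (MulAction.orbit G x) = 3)
    (hle : ∀ x : Ω, Nat.card (MulAction.orbit G x) ≤ 3) :
    Nonempty (G ≃* Equiv.Perm (Fin 3)) ∨
      Nonempty (G ≃* Multiplicative (ZMod 2) × Equiv.Perm (Fin 3)) := by
  subst hG
  let a : closure {ρ₀, ρ₁} := ⟨ρ₀, subset_closure (Set.mem_insert _ _)⟩
  let b : closure {ρ₀, ρ₁} := ⟨ρ₁, subset_closure (Set.mem_insert_of_mem _ rfl)⟩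
  have hab : closure {a, b} = ⊤ := by
    rw [← closure_closure_coe_preimage (k := {ρ₀, ρ₁})]
    congr
    ext ⟨g, _⟩
    simp [a, b]
  obtain ⟨x₀, hx₀⟩ := horb3
  by_cases h3 : (a * b) ^ 3 = 1
  · exact .inl (nonempty_mulEquiv_perm_fin_three (Subtype.ext h0) (Subtype.ext h1) hab hx₀ h3)
  · exact .inr (nonempty_mulEquiv_prod_perm_fin_three hle (Subtype.ext h0) (Subtype.ext h1) hab
      hx₀ h3)
end

section
/- Let G = ⟨ρ₀, ρ₁⟩ be a permutation group on a finite set Ω generated by two involutions, with all orbits of size at most 3 and at least one orbit of size 3. Then the order of ρ₀ρ₁ divides 6. -/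
theorem product_order_divides_six {Ω : Type*} [Fintype Ω]
    (ρ₀ ρ₁ : Equiv.Perm Ω)
    (h0 : ρ₀ ^ 2 = 1) (h1 : ρ₁ ^ 2 = 1)
    (G : Subgroup (Equiv.Perm Ω)) (hG : G = Subgroup.closure {ρ₀, ρ₁})
    (horb3 : ∃ x : Ω, Nat.card (MulAction.orbit G x) = 3)
    (hle : ∀ x : Ω, Nat.card (MulAction.orbit G x) ≤ 3) :
    orderOf (ρ₀ * ρ₁) ∣ 6 := by
  classical
  set σ := ρ₀ * ρ₁ with hσ
  have hσG : σ ∈ G := by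
    rw [hG]
    exact mul_mem (Subgroup.subset_closure (by simp))
      (Subgroup.subset_closure (by simp))
  apply orderOf_dvd_of_pow_eq_one
  ext x
  simp only [Equiv.Perm.coe_one, id_eq]
  have hsub : MulAction.orbit (Subgroup.zpowers σ) x ⊆ MulAction.orbit G x := by
    rintro y ⟨⟨g, hg⟩, rfl⟩
    exact ⟨⟨g, by rw [hG] at hσG ⊢; exact Subgroup.zpowers_le.mpr hσG hg⟩, rfl⟩
  have hcard : Nat.card (MulAction.orbit (Subgroup.zpowers σ) x) ≤ 3 :=
    le_trans (Nat.card_mono (Set.toFinite _) hsub) (hle x)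
  have hper : Function.minimalPeriod (σ • ·) x =
      Fintype.card (MulAction.orbit (Subgroup.zpowers σ) x) :=
    MulAction.minimalPeriod_eq_card σ x
  rw [Nat.card_eq_fintype_card, ← hper] at hcard
  have hpos : 0 < Function.minimalPeriod (σ • ·) x :=
    Nat.pos_of_ne_zero (MulAction.minimalPeriod_pos σ x).out
  have hdvd : Function.minimalPeriod (σ • ·) x ∣ 6 := by
    interval_cases h : Function.minimalPeriod (σ • ·) x <;> norm_num
  have := (MulAction.pow_smul_eq_iff_minimalPeriod_dvd (a := σ) (b := x) (n := 6)).mpr hdvd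
  simpa [Equiv.Perm.smul_def] using this
end

section
/- Let (G, {ρ₀, …, ρ_{r−1}}) be a string group generated by involutions. Then (G, {ρ₀,…,ρ_{r−1}}) satisfies the intersection property if and only if: (a) ⟨ρ₁,…,ρ_{r−1}⟩ with its generators satisfies the intersection property, (b) ⟨ρ₀,…,ρ_{r−2}⟩ with its generators satisfies the intersection property, and (c) ⟨ρ₁,…,ρ_{r−1}⟩ ∩ ⟨ρ₀,…,ρ_{r−2}⟩ = ⟨ρ₁,…,ρ_{r−2}⟩. -/
/-- The intersection property for the subfamily of generators indexed by `S`. -/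
def IntersectionProperty {G : Type*} [Group G] {r : ℕ}
    (ρ : Fin r → G) (S : Set (Fin r)) : Prop :=
  ∀ I J : Set (Fin r), I ⊆ S → J ⊆ S →
    Subgroup.closure (ρ '' I) ⊓ Subgroup.closure (ρ '' J) =
      Subgroup.closure (ρ '' (I ∩ J))

private lemma comm_of_inv {G : Type*} [Group G] {x y : G} (hx : x ^ 2 = 1) (hy : y ^ 2 = 1)
    (hxy : (x * y) ^ 2 = 1) : x * y = y * x := by
  have hx' : x * x = 1 := by rw [← sq]; exact hx
  have hy' : y * y = 1 := by rw [← sq]; exact hy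
  have h1 : (x * y) * (x * y) = 1 := by rw [← sq]; exact hxy
  have h2 : x * y = (x * y)⁻¹ := eq_inv_of_mul_eq_one_left h1
  have h3 : x⁻¹ = x := inv_eq_of_mul_eq_one_left hx'
  have h4 : y⁻¹ = y := inv_eq_of_mul_eq_one_left hy'
  rw [h2, mul_inv_rev, h3, h4]

/-- If `m ∉ S`, every element of the group generated by `ρ '' S` factors as a product of
an element generated by indices below `m` and one generated by indices above `m`. -/
private lemma split_mem {G : Type*} [Group G] {r : ℕ} (ρ : Fin r → G)
    (hinv : ∀ i, ρ i ^ 2 = 1)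
    (hstring : ∀ i j : Fin r, (i : ℕ) + 2 ≤ (j : ℕ) → (ρ i * ρ j) ^ 2 = 1)
    (S : Set (Fin r)) (m : Fin r) (hm : m ∉ S) {g : G}
    (hg : g ∈ Subgroup.closure (ρ '' S)) :
    ∃ a ∈ Subgroup.closure (ρ '' {i | i ∈ S ∧ (i : ℕ) < (m : ℕ)}),
      ∃ b ∈ Subgroup.closure (ρ '' {i | i ∈ S ∧ (m : ℕ) < (i : ℕ)}), g = a * b := by
  set A : Set (Fin r) := {i | i ∈ S ∧ (i : ℕ) < (m : ℕ)} with hA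
  set B : Set (Fin r) := {i | i ∈ S ∧ (m : ℕ) < (i : ℕ)} with hB
  have hcA : ∀ x ∈ ρ '' A, ∀ y ∈ ρ '' B, x * y = y * x := by
    rintro _ ⟨i, hi, rfl⟩ _ ⟨j, hj, rfl⟩
    have h1 : (i : ℕ) < (m : ℕ) := hi.2
    have h2 : (m : ℕ) < (j : ℕ) := hj.2
    exact comm_of_inv (hinv i) (hinv j) (hstring i j (by omega))
  have hBc : Subgroup.closure (ρ '' B) ≤ Subgroup.centralizer (ρ '' A) :=
    (Subgroup.closure_le _).mpr fun y hy =>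
      Subgroup.mem_centralizer_iff.mpr fun x hx => hcA x hx y hy
  have hcomm : ∀ a ∈ Subgroup.closure (ρ '' A), ∀ b ∈ Subgroup.closure (ρ '' B),
      a * b = b * a := by
    intro a ha b hb
    have hb' := hBc hb
    have hAc : Subgroup.closure (ρ '' A) ≤ Subgroup.centralizer {b} :=
      (Subgroup.closure_le _).mpr fun x hx => Subgroup.mem_centralizer_iff.mpr
        (by
          rintro h rfl
          exact (Subgroup.mem_centralizer_iff.mp hb' x hx).symm)
    have := Subgroup.mem_centralizer_iff.mp (hAc ha) b rfl
    exact this.symm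
  induction hg using Subgroup.closure_induction with
  | mem x hx =>
    rcases hx with ⟨i, hi, rfl⟩
    rcases lt_trichotomy (i : ℕ) (m : ℕ) with h | h | h
    · exact ⟨ρ i, Subgroup.subset_closure ⟨i, ⟨hi, h⟩, rfl⟩, 1, one_mem _, (mul_one _).symm⟩
    · exact absurd (show i = m from Fin.ext h ▸ rfl) (fun he => hm (he ▸ hi))
    · exact ⟨1, one_mem _, ρ i, Subgroup.subset_closure ⟨i, ⟨hi, h⟩, rfl⟩, (one_mul _).symm⟩
  | one => exact ⟨1, one_mem _, 1, one_mem _, (one_mul 1).symm⟩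
  | mul x y hx hy ihx ihy =>
    obtain ⟨a1, ha1, b1, hb1, rfl⟩ := ihx
    obtain ⟨a2, ha2, b2, hb2, rfl⟩ := ihy
    refine ⟨a1 * a2, mul_mem ha1 ha2, b1 * b2, mul_mem hb1 hb2, ?_⟩
    have h := hcomm a2 ha2 b1 hb1
    calc a1 * b1 * (a2 * b2) = a1 * (b1 * a2) * b2 := by group
      _ = a1 * (a2 * b1) * b2 := by rw [← h]
      _ = a1 * a2 * (b1 * b2) := by group
  | inv x hx ihx =>
    obtain ⟨a, ha, b, hb, rfl⟩ := ihx
    refine ⟨a⁻¹, inv_mem ha, b⁻¹, inv_mem hb, ?_⟩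
    rw [mul_inv_rev, ← mul_inv_rev, hcomm a ha b hb, mul_inv_rev]

theorem intersection_property_break_in_parts {G : Type*} [Group G] {r : ℕ}
    (hr : 1 ≤ r) (ρ : Fin r → G)
    (hinv : ∀ i, ρ i ^ 2 = 1)
    (hgen : Subgroup.closure (Set.range ρ) = ⊤)
    (hstring : ∀ i j : Fin r, (i : ℕ) + 2 ≤ (j : ℕ) → (ρ i * ρ j) ^ 2 = 1) :
    IntersectionProperty ρ Set.univ ↔
      (IntersectionProperty ρ {i | (i : ℕ) ≠ 0} ∧
        IntersectionProperty ρ {i | (i : ℕ) ≠ r - 1} ∧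
        Subgroup.closure (ρ '' {i | (i : ℕ) ≠ 0}) ⊓
            Subgroup.closure (ρ '' {i | (i : ℕ) ≠ r - 1}) =
          Subgroup.closure (ρ '' {i | (i : ℕ) ≠ 0 ∧ (i : ℕ) ≠ r - 1})) := by
  constructor
  · intro h
    refine ⟨fun I J hI hJ => h I J (Set.subset_univ _) (Set.subset_univ _),
      fun I J hI hJ => h I J (Set.subset_univ _) (Set.subset_univ _), ?_⟩
    exact h {i | (i : ℕ) ≠ 0} {i | (i : ℕ) ≠ r - 1} (Set.subset_univ _) (Set.subset_univ _)
  · rintro ⟨hA, hB, hC⟩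
    set P : Set (Fin r) := {i | (i : ℕ) ≠ 0} with hPdef
    set Q : Set (Fin r) := {i | (i : ℕ) ≠ r - 1} with hQdef
    have Cmono : ∀ {S T : Set (Fin r)}, S ⊆ T →
        Subgroup.closure (ρ '' S) ≤ Subgroup.closure (ρ '' T) :=
      fun h => Subgroup.closure_mono (Set.image_mono h)
    have hup : ∀ I J : Set (Fin r), Subgroup.closure (ρ '' (I ∩ J)) ≤
        Subgroup.closure (ρ '' I) ⊓ Subgroup.closure (ρ '' J) :=
      fun I J => le_inf (Cmono Set.inter_subset_left) (Cmono Set.inter_subset_right)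
    have hC' : Subgroup.closure (ρ '' P) ⊓ Subgroup.closure (ρ '' Q) =
        Subgroup.closure (ρ '' (P ∩ Q)) := hC
    have huniv : ∀ I : Set (Fin r), (∀ i, i ∈ I) → Subgroup.closure (ρ '' I) = ⊤ := by
      intro I h
      rw [Set.eq_univ_iff_forall.mpr h, Set.image_univ, hgen]
    -- Claim 1, restricted version: I ⊆ Q
    have claim1Q : ∀ I : Set (Fin r), I ⊆ Q →
        Subgroup.closure (ρ '' I) ⊓ Subgroup.closure (ρ '' P) =
          Subgroup.closure (ρ '' (I ∩ P)) := by
      intro I hIQ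
      refine le_antisymm ?_ (hup I P)
      have h1 : Subgroup.closure (ρ '' I) ⊓ Subgroup.closure (ρ '' P) ≤
          Subgroup.closure (ρ '' I) ⊓
            (Subgroup.closure (ρ '' P) ⊓ Subgroup.closure (ρ '' Q)) :=
        le_inf inf_le_left (le_inf inf_le_right (inf_le_left.trans (Cmono hIQ)))
      refine h1.trans ?_
      rw [hC', hB I (P ∩ Q) hIQ Set.inter_subset_right]
      exact Cmono fun i hi => ⟨hi.1, hi.2.1⟩
    -- Claim 2, restricted version: I ⊆ P
    have claim2P : ∀ I : Set (Fin r), I ⊆ P →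
        Subgroup.closure (ρ '' I) ⊓ Subgroup.closure (ρ '' Q) =
          Subgroup.closure (ρ '' (I ∩ Q)) := by
      intro I hIP
      refine le_antisymm ?_ (hup I Q)
      have h1 : Subgroup.closure (ρ '' I) ⊓ Subgroup.closure (ρ '' Q) ≤
          Subgroup.closure (ρ '' I) ⊓
            (Subgroup.closure (ρ '' P) ⊓ Subgroup.closure (ρ '' Q)) :=
        le_inf inf_le_left (le_inf (inf_le_left.trans (Cmono hIP)) inf_le_right)
      refine h1.trans ?_
      rw [hC', hA I (P ∩ Q) hIP Set.inter_subset_left]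
      exact Cmono fun i hi => ⟨hi.1, hi.2.2⟩
    -- Claim 1 in general
    have claim1 : ∀ I : Set (Fin r),
        Subgroup.closure (ρ '' I) ⊓ Subgroup.closure (ρ '' P) =
          Subgroup.closure (ρ '' (I ∩ P)) := by
      intro I
      by_cases hu : ∀ i, i ∈ I
      · rw [huniv I hu, top_inf_eq, Set.eq_univ_iff_forall.mpr hu, Set.univ_inter]
      · push_neg at hu
        obtain ⟨m, hm⟩ := hu
        refine le_antisymm ?_ (hup I P)
        intro g hg
        rw [Subgroup.mem_inf] at hg
        obtain ⟨hgI, hgP⟩ := hg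
        obtain ⟨a, ha, b, hb, rfl⟩ := split_mem ρ hinv hstring I m hm hgI
        have hBP : {i | i ∈ I ∧ (m : ℕ) < (i : ℕ)} ⊆ P := fun i hi => by
          have := hi.2; simp only [hPdef, Set.mem_setOf_eq]; omega
        have hAQ : {i | i ∈ I ∧ (i : ℕ) < (m : ℕ)} ⊆ Q := fun i hi => by
          have h1 := hi.2; have h2 := m.isLt
          simp only [hQdef, Set.mem_setOf_eq]; omega
        have hbP : b ∈ Subgroup.closure (ρ '' P) := Cmono hBP hb
        have haP : a ∈ Subgroup.closure (ρ '' P) := by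
          have : a = a * b * b⁻¹ := by group
          rw [this]; exact mul_mem hgP (inv_mem hbP)
        have haAP : a ∈ Subgroup.closure (ρ '' {i | i ∈ I ∧ (i : ℕ) < (m : ℕ)}) ⊓
            Subgroup.closure (ρ '' P) := Subgroup.mem_inf.mpr ⟨ha, haP⟩
        rw [claim1Q _ hAQ] at haAP
        refine mul_mem (Cmono ?_ haAP) (Cmono ?_ hb)
        · exact fun i hi => ⟨hi.1.1, hi.2⟩
        · exact fun i hi => ⟨hi.1, hBP hi⟩
    -- Claim 2 in general
    have claim2 : ∀ I : Set (Fin r),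
        Subgroup.closure (ρ '' I) ⊓ Subgroup.closure (ρ '' Q) =
          Subgroup.closure (ρ '' (I ∩ Q)) := by
      intro I
      by_cases hu : ∀ i, i ∈ I
      · rw [huniv I hu, top_inf_eq, Set.eq_univ_iff_forall.mpr hu, Set.univ_inter]
      · push_neg at hu
        obtain ⟨m, hm⟩ := hu
        refine le_antisymm ?_ (hup I Q)
        intro g hg
        rw [Subgroup.mem_inf] at hg
        obtain ⟨hgI, hgQ⟩ := hg
        obtain ⟨a, ha, b, hb, rfl⟩ := split_mem ρ hinv hstring I m hm hgI
        have hBP : {i | i ∈ I ∧ (m : ℕ) < (i : ℕ)} ⊆ P := fun i hi => by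
          have := hi.2; simp only [hPdef, Set.mem_setOf_eq]; omega
        have hAQ : {i | i ∈ I ∧ (i : ℕ) < (m : ℕ)} ⊆ Q := fun i hi => by
          have h1 := hi.2; have h2 := m.isLt
          simp only [hQdef, Set.mem_setOf_eq]; omega
        have haQ : a ∈ Subgroup.closure (ρ '' Q) := Cmono hAQ ha
        have hbQ : b ∈ Subgroup.closure (ρ '' Q) := by
          have : b = a⁻¹ * (a * b) := by group
          rw [this]; exact mul_mem (inv_mem haQ) hgQ
        have hbBQ : b ∈ Subgroup.closure (ρ '' {i | i ∈ I ∧ (m : ℕ) < (i : ℕ)}) ⊓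
            Subgroup.closure (ρ '' Q) := Subgroup.mem_inf.mpr ⟨hb, hbQ⟩
        rw [claim2P _ hBP] at hbBQ
        refine mul_mem (Cmono ?_ ha) (Cmono ?_ hbBQ)
        · exact fun i hi => ⟨hi.1, hAQ hi⟩
        · exact fun i hi => ⟨hi.1.1, hi.2⟩
    -- main statement
    intro I J _ _
    by_cases hu : ∀ j, j ∈ J
    · rw [huniv J hu, inf_top_eq, Set.eq_univ_iff_forall.mpr hu, Set.inter_univ]
    · push_neg at hu
      obtain ⟨m, hm⟩ := hu
      refine le_antisymm ?_ (hup I J)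
      intro g hg
      rw [Subgroup.mem_inf] at hg
      obtain ⟨hgI, hgJ⟩ := hg
      obtain ⟨a, ha, b, hb, rfl⟩ := split_mem ρ hinv hstring J m hm hgJ
      set Am : Set (Fin r) := {i | i ∈ J ∧ (i : ℕ) < (m : ℕ)} with hAm
      set Bm : Set (Fin r) := {i | i ∈ J ∧ (m : ℕ) < (i : ℕ)} with hBm
      have hBP : Bm ⊆ P := fun i hi => by
        have := hi.2; simp only [hPdef, Set.mem_setOf_eq]; omega
      have hAQ : Am ⊆ Q := fun i hi => by
        have h1 := hi.2; have h2 := m.isLt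
        simp only [hQdef, Set.mem_setOf_eq]; omega
      -- handle b
      have hbAI : b ∈ Subgroup.closure (ρ '' (Am ∪ I)) := by
        have : b = a⁻¹ * (a * b) := by group
        rw [this]
        exact mul_mem (inv_mem (Cmono Set.subset_union_left ha))
          (Cmono Set.subset_union_right hgI)
      have hbP : b ∈ Subgroup.closure (ρ '' P) := Cmono hBP hb
      have hb1 : b ∈ Subgroup.closure (ρ '' ((Am ∪ I) ∩ P)) := by
        rw [← claim1 (Am ∪ I)]; exact Subgroup.mem_inf.mpr ⟨hbAI, hbP⟩
      have hb2 : b ∈ Subgroup.closure (ρ '' (Bm ∩ ((Am ∪ I) ∩ P))) := by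
        rw [← hA Bm ((Am ∪ I) ∩ P) hBP Set.inter_subset_right]
        exact Subgroup.mem_inf.mpr ⟨hb, hb1⟩
      have hbIJ : b ∈ Subgroup.closure (ρ '' (I ∩ J)) := by
        refine Cmono ?_ hb2
        rintro i ⟨hiB, hiAI, -⟩
        rcases hiAI with hiA | hiI
        · exact absurd hiA.2 (by have := hiB.2; omega)
        · exact ⟨hiI, hiB.1⟩
      -- handle a
      have haIB : a ∈ Subgroup.closure (ρ '' (I ∪ Bm)) := by
        have : a = (a * b) * b⁻¹ := by group
        rw [this]
        exact mul_mem (Cmono Set.subset_union_left hgI)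
          (inv_mem (Cmono Set.subset_union_right hb))
      have haQ : a ∈ Subgroup.closure (ρ '' Q) := Cmono hAQ ha
      have ha1 : a ∈ Subgroup.closure (ρ '' ((I ∪ Bm) ∩ Q)) := by
        rw [← claim2 (I ∪ Bm)]; exact Subgroup.mem_inf.mpr ⟨haIB, haQ⟩
      have ha2 : a ∈ Subgroup.closure (ρ '' (Am ∩ ((I ∪ Bm) ∩ Q))) := by
        rw [← hB Am ((I ∪ Bm) ∩ Q) hAQ Set.inter_subset_right]
        exact Subgroup.mem_inf.mpr ⟨ha, ha1⟩
      have haIJ : a ∈ Subgroup.closure (ρ '' (I ∩ J)) := by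
        refine Cmono ?_ ha2
        rintro i ⟨hiA, hiIB, -⟩
        rcases hiIB with hiI | hiB
        · exact ⟨hiI, hiA.1⟩
        · exact absurd hiB.2 (by have := hiA.2; omega)
      exact mul_mem haIJ hbIJ
end

section
/- Let (G, {ρ₋₁, ρ₀, ρ₁, ρ₂}) be a string group generated by involutions such that G = ⟨ρ₋₁, ρ₀⟩ × ⟨ρ₁, ρ₂⟩ (i.e. ρ₀ commutes with ρ₁). Then G is not isomorphic to a symmetric group Sₙ for n ≥ 5. -/
/-!
Each factor `⟨a, b⟩` generated by two involutions is solvable: its rotation subgroup `⟨a * b⟩`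
is normal (conjugating `a * b` by `a` or `b` inverts it) and cyclic, and modulo it `a ≡ b`, so
the quotient is cyclic. Since the two factors commute elementwise and generate `G`, the group `G`
is a quotient of their direct product, hence solvable, whereas `Sₙ` is not solvable for `n ≥ 5`.
-/

open Subgroup

section

variable {G : Type*} [Group G]

instance Group.isSolvable_of_isMulCommutative [IsMulCommutative G] : Group.IsSolvable G :=
  Group.isSolvable_of_comm mul_comm'

theorem zpowers_mul_normal_of_closure_pair_eq_top {x y : G} (hx : x ^ 2 = 1) (hy : y ^ 2 = 1)
    (hgen : closure {x, y} = ⊤) : (zpowers (x * y)).Normal := by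
  have hxi : x⁻¹ = x := inv_eq_of_mul_eq_one_left (by rwa [← sq])
  have hyi : y⁻¹ = y := inv_eq_of_mul_eq_one_left (by rwa [← sq])
  rw [← normalizer_eq_top_iff, eq_top_iff, ← hgen, closure_le]
  rintro g (rfl | rfl) <;>
  · rw [SetLike.mem_coe, mem_normalizer_iff_map_conj_eq, MonoidHom.map_zpowers, ← zpowers_inv]
    congr 1
    simp [mul_assoc, hxi, hyi, ← sq, hx, hy]

theorem Group.isSolvable_of_closure_pair_eq_top {x y : G} (hx : x ^ 2 = 1) (hy : y ^ 2 = 1)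
    (hgen : closure {x, y} = ⊤) : Group.IsSolvable G := by
  set N := zpowers (x * y)
  have := zpowers_mul_normal_of_closure_pair_eq_top hx hy hgen
  have hxy : (x : G ⧸ N) = y := by
    rw [QuotientGroup.eq, inv_eq_of_mul_eq_one_left (by rwa [← sq] : x * x = 1)]
    exact mem_zpowers _
  have : IsCyclic (G ⧸ N) := isCyclic_iff_exists_zpowers_eq_top.mpr ⟨x, calc
    zpowers (x : G ⧸ N) = closure {(x : G ⧸ N), (y : G ⧸ N)} := by
      rw [hxy, Set.pair_eq_singleton, zpowers_eq_closure]
    _ = (closure {x, y}).map (QuotientGroup.mk' N) := by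
      rw [MonoidHom.map_closure, Set.image_pair]; rfl
    _ = ⊤ := by rw [hgen, map_top_of_surjective _ (QuotientGroup.mk'_surjective N)]⟩
  exact (isSolvable_iff_subgroup_quotient N).mpr ⟨inferInstance, inferInstance⟩

theorem isSolvable_closure_pair_of_sq_eq_one {x y : G} (hx : x ^ 2 = 1) (hy : y ^ 2 = 1) :
    Group.IsSolvable (closure {x, y}) := by
  let x' : closure {x, y} := ⟨x, subset_closure (by simp)⟩
  let y' : closure {x, y} := ⟨y, subset_closure (by simp)⟩
  have hgen : ((↑) : closure {x, y} → G) ⁻¹' {x, y} = {x', y'} := by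
    ext; simp [x', y', Subtype.ext_iff]
  exact Group.isSolvable_of_closure_pair_eq_top (x := x') (y := y') (Subtype.ext hx)
    (Subtype.ext hy) (hgen ▸ closure_closure_coe_preimage)

theorem Group.isSolvable_of_le_centralizer_of_sup_eq_top {H K : Subgroup G} [Group.IsSolvable H]
    [Group.IsSolvable K] (hHK : H ≤ centralizer K) (hsup : H ⊔ K = ⊤) : Group.IsSolvable G :=
  isSolvable_of_surjective (f := MonoidHom.noncommCoprod H.subtype K.subtype
    fun h k => Commute.symm (mem_centralizer_iff.mp (hHK h.2) k k.2)) <|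
    MonoidHom.range_eq_top.mp <| by
      rw [MonoidHom.noncommCoprod_range, range_subtype, range_subtype, hsup]

end

theorem direct_product_dihedrals_not_symmetric {G : Type*} [Group G]
    (ρneg ρ₀ ρ₁ ρ₂ : G)
    (hm1 : ρneg ^ 2 = 1) (h0 : ρ₀ ^ 2 = 1) (h1 : ρ₁ ^ 2 = 1) (h2 : ρ₂ ^ 2 = 1)
    (hgen : Subgroup.closure ({ρneg, ρ₀, ρ₁, ρ₂} : Set G) = ⊤)
    (hc1 : Commute ρneg ρ₁) (hc2 : Commute ρneg ρ₂)
    (hc3 : Commute ρ₀ ρ₂) (hc4 : Commute ρ₀ ρ₁) :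
    ∀ n : ℕ, 5 ≤ n → IsEmpty (G ≃* Equiv.Perm (Fin n)) := by
  have := isSolvable_closure_pair_of_sq_eq_one hm1 h0
  have := isSolvable_closure_pair_of_sq_eq_one h1 h2
  have hcomm : closure {ρneg, ρ₀} ≤ centralizer (closure {ρ₁, ρ₂}) := by
    rw [centralizer_closure, closure_le]
    simp [Set.insert_subset_iff, mem_centralizer_iff, hc1.eq, hc2.eq, hc3.eq, hc4.eq]
  have hsup : closure {ρneg, ρ₀} ⊔ closure {ρ₁, ρ₂} = ⊤ := by
    rw [← Subgroup.closure_union, Set.insert_union, Set.singleton_union, hgen]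
  have : Group.IsSolvable G := Group.isSolvable_of_le_centralizer_of_sup_eq_top hcomm hsup
  intro n hn
  refine ⟨fun e => Equiv.Perm.not_isSolvable (Fin n) (by simpa using hn) ?_⟩
  exact Group.isSolvable_of_surjective (f := e.toMonoidHom) e.surjective
end

section
/- Let G* be a k-sesqui-extension of G = ⟨ρ₀,…,ρ_{r−1}⟩ with respect to an involution τ commuting with all ρᵢ, τ ∉ G. If all generators ρᵢτ^{δᵢₖ} of G* are even permutations and τ is odd, then G* ≅ G. -/
theorem even_sesqui_extension_iso {Ω : Type*} [Fintype Ω] [DecidableEq Ω] {r : ℕ}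
    (ρ : Fin r → Equiv.Perm Ω) (τ : Equiv.Perm Ω) (k : Fin r)
    (hρ : ∀ i, ρ i ^ 2 = 1) (hτ : orderOf τ = 2)
    (hcomm : ∀ i, Commute τ (ρ i))
    (G : Subgroup (Equiv.Perm Ω)) (hG : G = Subgroup.closure (Set.range ρ))
    (hτG : τ ∉ G)
    (Gs : Subgroup (Equiv.Perm Ω))
    (hGs : Gs = Subgroup.closure
      (Set.range fun i => ρ i * τ ^ (if i = k then 1 else 0)))
    (heven : ∀ i, Equiv.Perm.sign (ρ i * τ ^ (if i = k then 1 else 0)) = 1)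
    (hodd : Equiv.Perm.sign τ = -1) :
    Nonempty (Gs ≃* G) := by
  have hτ2 : τ ^ 2 = 1 := by rw [← hτ]; exact pow_orderOf_eq_one τ
  -- τ commutes with everything in G
  have hGcent : G ≤ Subgroup.centralizer {τ} := by
    rw [hG]
    apply (Subgroup.closure_le _).mpr
    rintro x ⟨i, rfl⟩
    rw [SetLike.mem_coe, Subgroup.mem_centralizer_iff]
    rintro h rfl
    exact hcomm i
  have hcommG : ∀ g ∈ G, Commute τ g := by
    intro g hg
    exact Subgroup.mem_centralizer_iff.mp (hGcent hg) τ rfl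
  -- exponent function
  set e : Equiv.Perm Ω → ℕ := fun g => if Equiv.Perm.sign g = 1 then 0 else 1 with he
  have hepow : ∀ g h : Equiv.Perm Ω, τ ^ e (g * h) = τ ^ (e g + e h) := by
    intro g h
    have hs : Equiv.Perm.sign (g * h) = Equiv.Perm.sign g * Equiv.Perm.sign h := by
      simp [map_mul]
    rcases Int.units_eq_one_or (Equiv.Perm.sign g) with hg | hg <;>
      rcases Int.units_eq_one_or (Equiv.Perm.sign h) with hh | hh <;>
        simp [he, hs, hg, hh, hτ2]
  have hmul : ∀ x y : Equiv.Perm Ω, y ∈ G →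
      (x * y) * τ ^ e (x * y) = (x * τ ^ e x) * (y * τ ^ e y) := by
    intro x y hy
    have hch : Commute (τ ^ e x) y := (hcommG y hy).pow_left _
    rw [hepow, pow_add, hch.mul_mul_mul_comm]
  -- the homomorphism
  let f : G →* Equiv.Perm Ω :=
    { toFun := fun g => (g : Equiv.Perm Ω) * τ ^ e (g : Equiv.Perm Ω)
      map_one' := by simp [he]
      map_mul' := by
        intro g h
        push_cast
        exact hmul g h h.2 }
  -- signs of generators
  have hsign : ∀ i, Equiv.Perm.sign (ρ i) = if i = k then -1 else 1 := by
    intro i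
    have hi := heven i
    by_cases hik : i = k
    · rw [if_pos hik, pow_one, map_mul, hodd] at hi
      rw [if_pos hik]
      rcases Int.units_eq_one_or (Equiv.Perm.sign (ρ i)) with h | h
      · rw [h] at hi; exact absurd hi (by decide)
      · exact h
    · rw [if_neg hik, pow_zero, mul_one] at hi
      rw [if_neg hik]; exact hi
  have hρG : ∀ i, ρ i ∈ G := by
    intro i; rw [hG]; exact Subgroup.subset_closure ⟨i, rfl⟩
  have hfρ : ∀ i, ρ i * τ ^ e (ρ i) = ρ i * τ ^ (if i = k then 1 else 0) := by
    intro i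
    congr 1
    by_cases hik : i = k
    · have h1 : Equiv.Perm.sign (ρ i) = -1 := by rw [hsign i, if_pos hik]
      rw [if_pos hik, he]
      simp only [h1]
      rw [if_neg (by decide)]
    · have h1 : Equiv.Perm.sign (ρ i) = 1 := by rw [hsign i, if_neg hik]
      rw [if_neg hik]
      simp [he, h1]
  have hτself : τ⁻¹ = τ := by
    apply inv_eq_of_mul_eq_one_right
    rw [← sq]; exact hτ2
  -- injectivity
  have hinj : Function.Injective f := by
    rw [← MonoidHom.ker_eq_bot_iff, eq_bot_iff]
    intro g hg
    have hg1 : (g : Equiv.Perm Ω) * τ ^ e (g : Equiv.Perm Ω) = 1 := hg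
    by_cases hs : Equiv.Perm.sign (g : Equiv.Perm Ω) = 1
    · rw [he] at hg1
      simp only [if_pos hs, pow_zero, mul_one] at hg1
      exact Subgroup.mem_bot.mpr (Subtype.ext (by simpa using hg1))
    · exfalso
      apply hτG
      rw [he] at hg1
      simp only [if_neg hs, pow_one] at hg1
      have h2 : τ = (g : Equiv.Perm Ω)⁻¹ := eq_inv_of_mul_eq_one_left
        (by rwa [← (hcommG _ g.2).eq] at hg1)
      rw [h2]; exact G.inv_mem g.2
  -- range of f is Gs
  have hrange : f.range = Gs := by
    apply le_antisymm
    · rintro _ ⟨⟨g, hg⟩, rfl⟩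
      have hgG : g ∈ Subgroup.closure (Set.range ρ) := hG ▸ hg
      show g * τ ^ e g ∈ Gs
      clear hg
      induction hgG using Subgroup.closure_induction with
      | mem x hx =>
          obtain ⟨i, rfl⟩ := hx
          rw [hfρ i, hGs]
          exact Subgroup.subset_closure ⟨i, rfl⟩
      | one => simpa [he] using Gs.one_mem
      | mul x y hx hy ihx ihy =>
          rw [hmul x y (hG ▸ hy)]
          exact Gs.mul_mem ihx ihy
      | inv x hx ihx =>
          have hxG : x ∈ G := hG ▸ hx
          have hc : Commute (τ ^ e x) x⁻¹ := ((hcommG x hxG).pow_left _).inv_right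
          have he_inv : e x⁻¹ = e x := by
            rcases Int.units_eq_one_or (Equiv.Perm.sign x) with h | h <;>
              simp [he, map_inv, h]
          have hτa : (τ ^ e x)⁻¹ = τ ^ e x := by
            rcases Nat.lt_or_ge (e x) 1 with h | h
            · interval_cases h' : e x <;> simp
            · have h1 : e x = 1 := by
                rw [he] at *
                by_cases hs : Equiv.Perm.sign x = 1 <;> simp [hs] at h ⊢
              rw [h1, pow_one, hτself]
          have key : x⁻¹ * τ ^ e x⁻¹ = (x * τ ^ e x)⁻¹ := by
            rw [he_inv, mul_inv_rev, hτa, hc.eq]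
          rw [key]
          exact Gs.inv_mem ihx
    · rw [hGs]
      apply (Subgroup.closure_le _).mpr
      rintro x ⟨i, rfl⟩
      exact ⟨⟨ρ i, hρG i⟩, hfρ i⟩
  exact ⟨((MonoidHom.ofInjective hinj).trans (MulEquiv.subgroupCongr hrange)).symm⟩
end

section
/- Consider the permutation group G = ⟨ρ₋₁, ρ₀, ρ₁⟩ on {1,…,6} where ρ₋₁ = (3,4), ρ₀ = (2,3)(4,5), ρ₁ = (1,2)(5,6). Then G is isomorphic to C₂ × S₄, of order 48, acting transitively on the 6 points as the symmetry group of the cube on its faces. In particular G does not act independently on {1,2,3} and {4,5,6}: the setwise stabilizer of {1,2,3} does not induce all of S₃ × S₃ on the two triples. -/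
/-!
Label the six points by the 2-subsets of `Fin 4`, i.e. the edges of a tetrahedron inscribed in
the cube: each face carries one edge as a diagonal, and opposite faces carry complementary edges.
Then `Perm (Fin 4)` acts on the points through its action on edges, and complementation is an
involution commuting with this action that is not induced by any permutation, so `C₂ × S₄` embeds
into `Perm (Fin 6)`. Its image contains the three generators and is generated by their images,
hence equals `G`. Transitivity comes from `S₄` being transitive on 2-subsets. Every element of
`G` commutes with complementation, the antipodal map `(0 5)(1 4)(2 3)`, while the transposition
`(0 1)`, which stabilises `{0, 1, 2}`, does not.
-/

open Equiv MulAction Set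
open scoped Pointwise

theorem Multiplicative.zmod_two_eq_one_or_eq_ofAdd_one (ε : Multiplicative (ZMod 2)) :
    ε = 1 ∨ ε = .ofAdd 1 := by
  revert ε
  decide

namespace MonoidHom

variable {H : Type*} [Group H] {c : H}

def involutionHom (c : H) (hc : c * c = 1) : Multiplicative (ZMod 2) →* H where
  toFun ε := if ε = 1 then 1 else c
  map_one' := if_pos rfl
  map_mul' a b := by
    obtain rfl | rfl := a.zmod_two_eq_one_or_eq_ofAdd_one <;>
      obtain rfl | rfl := b.zmod_two_eq_one_or_eq_ofAdd_one <;>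
      simp [hc, ← ofAdd_add, (by decide : (1 : ZMod 2) + 1 = 0)]

variable (hc : c * c = 1)

theorem commute_involutionHom {y : H} (hy : Commute c y) (ε : Multiplicative (ZMod 2)) :
    Commute (involutionHom c hc ε) y := by
  obtain rfl | rfl := ε.zmod_two_eq_one_or_eq_ofAdd_one
  exacts [(map_one (involutionHom c hc)).symm ▸ Commute.one_left y, hy]

theorem involutionHom_injective (h1 : c ≠ 1) : Function.Injective (involutionHom c hc) := by
  refine (injective_iff_map_eq_one _).mpr fun ε hε => ?_
  obtain rfl | rfl := ε.zmod_two_eq_one_or_eq_ofAdd_one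
  exacts [rfl, (h1 hε).elim]

end MonoidHom

namespace Set.powersetCard

variable {α : Type*} [DecidableEq α] [Fintype α] {n : ℕ} (h : n + n = Fintype.card α)

theorem compl_mul_self : (compl h : Perm (powersetCard α n)) * compl h = 1 :=
  Equiv.ext fun s => Subtype.ext (compl_compl (s : Finset α))

theorem commute_compl_toPerm (σ : Perm α) :
    Commute (compl h : Perm (powersetCard α n)) (toPerm σ) :=
  Equiv.ext fun s => (mulActionHom_compl (Perm α) α h).map_smul σ s

theorem toPerm_ne_compl (hn : 2 ≤ n) (σ : Perm α) :
    (toPerm σ : Perm (powersetCard α n)) ≠ compl h := by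
  intro hσ
  obtain ⟨a⟩ : Nonempty α := Fintype.card_pos_iff.mp (by omega)
  -- an `n`-set `s ∋ a, σ a` has `σ a ∈ s ∩ σ • s`, so `σ • s ≠ sᶜ`
  obtain ⟨s, has, -, hs⟩ := Finset.exists_subsuperset_card_eq (Finset.subset_univ {a, σ a})
    (Finset.card_le_two.trans hn) (by rw [Finset.card_univ]; omega)
  have hσs : σ • ofCard hs = compl h (ofCard hs) := congr($hσ (ofCard hs))
  have hσa : σ a ∈ ((σ • ofCard hs : powersetCard α n) : Finset α) := by
    rw [coe_smul]
    exact Finset.smul_mem_smul_finset (has (Finset.mem_insert_self a _))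
  rw [hσs, coe_compl, Finset.mem_compl] at hσa
  exact hσa (has (by simp))

def permComplHom : Multiplicative (ZMod 2) × Perm α →* Perm (powersetCard α n) :=
  (MonoidHom.involutionHom _ (compl_mul_self h)).noncommCoprod (toPermHom (Perm α) _)
    fun ε σ => MonoidHom.commute_involutionHom _ (commute_compl_toPerm h σ) ε

theorem permComplHom_one_mk (σ : Perm α) (s : powersetCard α n) :
    permComplHom h (1, σ) s = σ • s :=
  rfl

theorem permComplHom_injective (hn : 2 ≤ n) : Function.Injective (permComplHom h) := by
  have : FaithfulSMul (Perm α) (powersetCard α n) :=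
    faithfulSMul (by omega) (by simp [ENat.card_eq_coe_fintype_card]; omega)
  refine (MonoidHom.noncommCoprod_injective _ _ _).mpr
    ⟨MonoidHom.involutionHom_injective _ fun h1 => ?_, toPerm_injective, ?_⟩
  · exact toPerm_ne_compl h hn 1 (by rw [toPerm_one, h1])
  · rw [disjoint_iff_inf_le]
    rintro _ ⟨⟨ε, rfl⟩, σ, hσ⟩
    obtain rfl | rfl := ε.zmod_two_eq_one_or_eq_ofAdd_one
    · exact map_one _
    · exact (toPerm_ne_compl h hn σ hσ).elim

end Set.powersetCard

noncomputable def cubeFace : Fin 6 ≃ powersetCard (Fin 4) 2 :=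
  .ofBijective ![⟨{0, 1}, rfl⟩, ⟨{0, 2}, rfl⟩, ⟨{0, 3}, rfl⟩, ⟨{1, 2}, rfl⟩, ⟨{1, 3}, rfl⟩,
    ⟨{2, 3}, rfl⟩] <| (Fintype.bijective_iff_injective_and_card _).mpr ⟨by decide, by
      rw [Fintype.card_eq_nat_card, Fintype.card_eq_nat_card, powersetCard.card, Nat.card_fin,
        Nat.card_fin]
      rfl⟩

noncomputable def cubeHom : Multiplicative (ZMod 2) × Perm (Fin 4) →* Perm (Fin 6) :=
  cubeFace.symm.permCongrHom.toMonoidHom.comp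
    (powersetCard.permComplHom (Fintype.card_fin 4).symm)

theorem cubeHom_injective : Function.Injective cubeHom :=
  cubeFace.symm.permCongrHom.injective.comp (powersetCard.permComplHom_injective _ le_rfl)

theorem cubeHom_apply (p : Multiplicative (ZMod 2) × Perm (Fin 4)) (x : Fin 6) :
    cubeHom p x =
      cubeFace.symm (powersetCard.permComplHom (Fintype.card_fin 4).symm p (cubeFace x)) :=
  rfl

theorem cubeHom_eq_iff {p : Multiplicative (ZMod 2) × Perm (Fin 4)} {g : Perm (Fin 6)} :
    cubeHom p = g ↔
      ∀ x, powersetCard.permComplHom (Fintype.card_fin 4).symm p (cubeFace x) = cubeFace (g x) := by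
  simp only [Equiv.ext_iff, cubeHom_apply, symm_apply_eq]

theorem cubeHom_ofAdd_one_swap_mul_swap : cubeHom (.ofAdd 1, swap 0 3 * swap 1 2) = swap 2 3 := by
  rw [cubeHom_eq_iff]
  decide

theorem cubeHom_one_swap_two_three : cubeHom (1, swap 2 3) = swap 1 2 * swap 3 4 := by
  rw [cubeHom_eq_iff]
  decide

theorem cubeHom_one_swap_one_two : cubeHom (1, swap 1 2) = swap 0 1 * swap 4 5 := by
  rw [cubeHom_eq_iff]
  decide

theorem cubeHom_one_swap_zero_one :
    cubeHom (1, swap 0 1) = swap 2 3 * (swap 1 2 * swap 3 4) * swap 2 3 := by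
  rw [cubeHom_eq_iff]
  decide

def cubeFaceGroup : Subgroup (Perm (Fin 6)) :=
  Subgroup.closure {swap 2 3, swap 1 2 * swap 3 4, swap 0 1 * swap 4 5}

theorem cubeHom_one_mk_mem (σ : Perm (Fin 4)) : cubeHom (1, σ) ∈ cubeFaceGroup := by
  have hσ : σ ∈ Subgroup.closure (Set.range fun i : Fin 3 => swap i.castSucc i.succ) := by
    rw [Subgroup.closure_eq_top_of_mclosure_eq_top (Perm.mclosure_swap_castSucc_succ 3)]
    exact Subgroup.mem_top σ
  refine (Subgroup.closure_le (cubeFaceGroup.comap (cubeHom.comp (.inr _ _)))).mpr ?_ hσ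
  rintro _ ⟨i, rfl⟩
  have hgen : ({swap 2 3, swap 1 2 * swap 3 4, swap 0 1 * swap 4 5} : Set (Perm (Fin 6))) ⊆
      cubeFaceGroup :=
    Subgroup.subset_closure
  fin_cases i
  · show cubeHom (1, swap 0 1) ∈ cubeFaceGroup
    rw [cubeHom_one_swap_zero_one]
    exact mul_mem (mul_mem (hgen (by simp)) (hgen (by simp))) (hgen (by simp))
  · show cubeHom (1, swap 1 2) ∈ cubeFaceGroup
    exact cubeHom_one_swap_one_two ▸ hgen (by simp)
  · show cubeHom (1, swap 2 3) ∈ cubeFaceGroup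
    exact cubeHom_one_swap_two_three ▸ hgen (by simp)

theorem cubeHom_mk_one_mem (ε : Multiplicative (ZMod 2)) : cubeHom (ε, 1) ∈ cubeFaceGroup := by
  obtain rfl | rfl := ε.zmod_two_eq_one_or_eq_ofAdd_one
  · exact (map_one cubeHom).symm ▸ one_mem _
  · have h : ((.ofAdd 1, 1) : Multiplicative (ZMod 2) × Perm (Fin 4)) =
        (.ofAdd 1, swap 0 3 * swap 1 2) * (1, swap 0 3 * swap 1 2)⁻¹ := by
      rw [Prod.inv_mk, inv_one, Prod.mk_mul_mk, mul_one, mul_inv_cancel]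
    rw [h, map_mul, map_inv, cubeHom_ofAdd_one_swap_mul_swap]
    exact mul_mem (Subgroup.subset_closure (by simp)) (inv_mem (cubeHom_one_mk_mem _))

theorem range_cubeHom : cubeHom.range = cubeFaceGroup := by
  refine le_antisymm ?_ ((Subgroup.closure_le _).mpr ?_)
  · rintro _ ⟨⟨ε, σ⟩, rfl⟩
    have h : ((ε, σ) : Multiplicative (ZMod 2) × Perm (Fin 4)) = (ε, 1) * (1, σ) := by simp
    rw [h, map_mul]
    exact mul_mem (cubeHom_mk_one_mem ε) (cubeHom_one_mk_mem σ)
  · simp only [Set.insert_subset_iff, Set.singleton_subset_iff, SetLike.mem_coe]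
    exact ⟨⟨_, cubeHom_ofAdd_one_swap_mul_swap⟩, ⟨_, cubeHom_one_swap_two_three⟩,
      ⟨_, cubeHom_one_swap_one_two⟩⟩

theorem exists_mem_cubeFaceGroup_apply_eq (x y : Fin 6) : ∃ g ∈ cubeFaceGroup, g x = y := by
  obtain ⟨σ, hσ⟩ := (powersetCard.isPretransitive (α := Fin 4) (n := 2)).exists_smul_eq
    (cubeFace x) (cubeFace y)
  refine ⟨cubeHom (1, σ), cubeHom_one_mk_mem σ, ?_⟩
  rw [cubeHom_apply, powersetCard.permComplHom_one_mk, hσ, symm_apply_apply]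

def antipode : Perm (Fin 6) := swap 0 5 * swap 1 4 * swap 2 3

theorem cubeFaceGroup_le_centralizer_antipode :
    cubeFaceGroup ≤ Subgroup.centralizer {antipode} := by
  rw [cubeFaceGroup, Subgroup.closure_le]
  simp only [Set.insert_subset_iff, Set.singleton_subset_iff, SetLike.mem_coe,
    Subgroup.mem_centralizer_singleton_iff]
  decide

theorem cube_symmetry_group_on_faces (G : Subgroup (Equiv.Perm (Fin 6)))
    (hG : G = Subgroup.closure {Equiv.swap 2 3,
      Equiv.swap 1 2 * Equiv.swap 3 4, Equiv.swap 0 1 * Equiv.swap 4 5}) :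
    Nat.card G = 48 ∧
    Nonempty (G ≃* Multiplicative (ZMod 2) × Equiv.Perm (Fin 4)) ∧
    (∀ x y : Fin 6, ∃ g ∈ G, g x = y) ∧
    ¬ (∀ π : Equiv.Perm (Fin 6),
        (∀ x ∈ ({0, 1, 2} : Set (Fin 6)), π x ∈ ({0, 1, 2} : Set (Fin 6))) →
          π ∈ G) := by
  obtain rfl : G = cubeFaceGroup := hG
  let e : cubeFaceGroup ≃* Multiplicative (ZMod 2) × Perm (Fin 4) :=
    (MulEquiv.subgroupCongr range_cubeHom.symm).trans (MonoidHom.ofInjective cubeHom_injective).symm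
  refine ⟨?_, ⟨e⟩, exists_mem_cubeFaceGroup_apply_eq, fun h => ?_⟩
  · rw [Nat.card_congr e.toEquiv, Nat.card_prod, Nat.card_perm]
    simp [Nat.factorial]
  · have hswap := cubeFaceGroup_le_centralizer_antipode <| h (swap 0 1) <| by
      simp only [Set.mem_insert_iff, Set.mem_singleton_iff, forall_eq_or_imp, forall_eq]
      decide
    rw [Subgroup.mem_centralizer_singleton_iff] at hswap
    revert hswap
    decide
end

section
/- With ρ₀ = (2,3)(6,9)(7,8), ρ₁ = (1,2)(3,4)(5,6), ρ₂ = (4,5)(6,7)(8,9) in S₉: the group ⟨ρ₀, ρ₁, ρ₂⟩ equals S₉, the string property holds ((ρ₀ρ₂)² = 1), and if one sets ρ₋₁ = (1,2) and ρ₁' = (3,4)(5,6), then the quadruple (ρ₋₁, ρ₀, ρ₁', ρ₂) is a string group generated by involutions generating S₉ which fails the intersection property: ⟨ρ₋₁, ρ₀, ρ₁'⟩ ∩ ⟨ρ₀, ρ₁', ρ₂⟩ ≠ ⟨ρ₀, ρ₁'⟩. -/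
set_option maxRecDepth 100000 in
set_option maxHeartbeats 1000000 in
theorem S9_rank_augmentation_counterexample
    (ρ₀ ρ₁ ρ₂ ρneg ρ₁' : Equiv.Perm (Fin 9))
    (h0 : ρ₀ = Equiv.swap 1 2 * Equiv.swap 5 8 * Equiv.swap 6 7)
    (h1 : ρ₁ = Equiv.swap 0 1 * Equiv.swap 2 3 * Equiv.swap 4 5)
    (h2 : ρ₂ = Equiv.swap 3 4 * Equiv.swap 5 6 * Equiv.swap 7 8)
    (hm1 : ρneg = Equiv.swap 0 1)
    (h1' : ρ₁' = Equiv.swap 2 3 * Equiv.swap 4 5) :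
    Subgroup.closure ({ρ₀, ρ₁, ρ₂} : Set (Equiv.Perm (Fin 9))) = ⊤ ∧
    (ρ₀ * ρ₂) ^ 2 = 1 ∧ (ρneg * ρ₁') ^ 2 = 1 ∧ (ρneg * ρ₂) ^ 2 = 1 ∧
    Subgroup.closure ({ρneg, ρ₀, ρ₁', ρ₂} : Set (Equiv.Perm (Fin 9))) = ⊤ ∧
    Subgroup.closure ({ρneg, ρ₀, ρ₁'} : Set (Equiv.Perm (Fin 9))) ⊓
        Subgroup.closure ({ρ₀, ρ₁', ρ₂} : Set (Equiv.Perm (Fin 9))) ≠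
      Subgroup.closure ({ρ₀, ρ₁'} : Set (Equiv.Perm (Fin 9))) := by
  have cr0 : ρ₀ ∈ Subgroup.closure ({ρ₀, ρ₁, ρ₂} : Set (Equiv.Perm (Fin 9))) :=
    Subgroup.subset_closure (by simp)
  have cr1 : ρ₁ ∈ Subgroup.closure ({ρ₀, ρ₁, ρ₂} : Set (Equiv.Perm (Fin 9))) :=
    Subgroup.subset_closure (by simp)
  have cr2 : ρ₂ ∈ Subgroup.closure ({ρ₀, ρ₁, ρ₂} : Set (Equiv.Perm (Fin 9))) :=
    Subgroup.subset_closure (by simp)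
  have htop : Subgroup.closure ({ρ₀, ρ₁, ρ₂} : Set (Equiv.Perm (Fin 9))) = ⊤ := by
    have ecyc : finRotate 9 = ρ₁ * ρ₀ * ρ₁ * ρ₀ * ρ₂ * ρ₁ * ρ₂ * ρ₁ * ρ₀ * ρ₁ * ρ₂ * ρ₁ * ρ₂ * ρ₁ * ρ₂ * ρ₁ * ρ₀ * ρ₂ * ρ₁ * ρ₂ * ρ₁ * ρ₀ * ρ₁ * ρ₀ := by
      rw [h0, h1, h2]; decide
    have eswap : Equiv.swap (0 : Fin 9) (finRotate 9 0) = ρ₀ * ρ₁ * ρ₀ * ρ₁ * ρ₀ * ρ₁ * ρ₀ * ρ₁ * ρ₀ * ρ₂ * ρ₁ * ρ₂ * ρ₁ * ρ₀ * ρ₁ * ρ₀ * ρ₂ * ρ₁ * ρ₀ * ρ₁ * ρ₀ * ρ₁ * ρ₂ * ρ₁ * ρ₂ * ρ₁ * ρ₀ * ρ₁ * ρ₂ := by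
      rw [h0, h1, h2]; decide
    have hcycmem : finRotate 9 ∈ Subgroup.closure ({ρ₀, ρ₁, ρ₂} : Set (Equiv.Perm (Fin 9))) := by
      rw [ecyc]; exact mul_mem (mul_mem (mul_mem (mul_mem (mul_mem (mul_mem (mul_mem (mul_mem (mul_mem (mul_mem (mul_mem (mul_mem (mul_mem (mul_mem (mul_mem (mul_mem (mul_mem (mul_mem (mul_mem (mul_mem (mul_mem (mul_mem (mul_mem (cr1) cr0) cr1) cr0) cr2) cr1) cr2) cr1) cr0) cr1) cr2) cr1) cr2) cr1) cr2) cr1) cr0) cr2) cr1) cr2) cr1) cr0) cr1) cr0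
    have hswapmem : Equiv.swap (0 : Fin 9) (finRotate 9 0) ∈
        Subgroup.closure ({ρ₀, ρ₁, ρ₂} : Set (Equiv.Perm (Fin 9))) := by
      rw [eswap]; exact mul_mem (mul_mem (mul_mem (mul_mem (mul_mem (mul_mem (mul_mem (mul_mem (mul_mem (mul_mem (mul_mem (mul_mem (mul_mem (mul_mem (mul_mem (mul_mem (mul_mem (mul_mem (mul_mem (mul_mem (mul_mem (mul_mem (mul_mem (mul_mem (mul_mem (mul_mem (mul_mem (mul_mem (cr0) cr1) cr0) cr1) cr0) cr1) cr0) cr1) cr0) cr2) cr1) cr2) cr1) cr0) cr1) cr0) cr2) cr1) cr0) cr1) cr0) cr1) cr2) cr1) cr2) cr1) cr0) cr1) cr2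
    have hcyc : (finRotate 9).IsCycle := isCycle_finRotate (n := 7)
    have hsupp : (finRotate 9).support = Finset.univ := support_finRotate (n := 7)
    rw [eq_top_iff, ← Equiv.Perm.closure_cycle_adjacent_swap hcyc hsupp 0,
      Subgroup.closure_le]
    rintro x hx
    simp only [Set.mem_insert_iff, Set.mem_singleton_iff] at hx
    rcases hx with rfl | rfl
    · exact hcycmem
    · exact hswapmem
  refine ⟨htop, by rw [h0, h2]; decide, by rw [hm1, h1']; decide, by rw [hm1, h2]; decide,
    ?_, ?_⟩
  · rw [eq_top_iff, ← htop, Subgroup.closure_le]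
    have e1 : ρ₁ = ρneg * ρ₁' := by rw [h1, hm1, h1']; decide
    rintro x hx
    simp only [Set.mem_insert_iff, Set.mem_singleton_iff] at hx
    rcases hx with rfl | rfl | rfl
    · exact Subgroup.subset_closure (by simp)
    · rw [e1]
      exact mul_mem (Subgroup.subset_closure (by simp)) (Subgroup.subset_closure (by simp))
    · exact Subgroup.subset_closure (by simp)
  · intro hcontra
    have arn : ρneg ∈ Subgroup.closure ({ρneg, ρ₀, ρ₁'} : Set (Equiv.Perm (Fin 9))) :=
      Subgroup.subset_closure (by simp)
    have ar0 : ρ₀ ∈ Subgroup.closure ({ρneg, ρ₀, ρ₁'} : Set (Equiv.Perm (Fin 9))) :=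
      Subgroup.subset_closure (by simp)
    have ar1p : ρ₁' ∈ Subgroup.closure ({ρneg, ρ₀, ρ₁'} : Set (Equiv.Perm (Fin 9))) :=
      Subgroup.subset_closure (by simp)
    have br0 : ρ₀ ∈ Subgroup.closure ({ρ₀, ρ₁', ρ₂} : Set (Equiv.Perm (Fin 9))) :=
      Subgroup.subset_closure (by simp)
    have br1p : ρ₁' ∈ Subgroup.closure ({ρ₀, ρ₁', ρ₂} : Set (Equiv.Perm (Fin 9))) :=
      Subgroup.subset_closure (by simp)
    have br2 : ρ₂ ∈ Subgroup.closure ({ρ₀, ρ₁', ρ₂} : Set (Equiv.Perm (Fin 9))) :=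
      Subgroup.subset_closure (by simp)
    have hga : (ρneg * ρ₀ * ρ₁' * ρ₀ * ρneg * ρ₁' * ρ₀ * ρneg * ρ₁' * ρ₀) ∈ Subgroup.closure ({ρneg, ρ₀, ρ₁'} : Set (Equiv.Perm (Fin 9))) :=
      mul_mem (mul_mem (mul_mem (mul_mem (mul_mem (mul_mem (mul_mem (mul_mem (mul_mem (arn) ar0) ar1p) ar0) arn) ar1p) ar0) arn) ar1p) ar0
    have hgb : (ρ₁' * ρ₂ * ρ₁' * ρ₀ * ρ₁' * ρ₀ * ρ₁' * ρ₂ * ρ₁' * ρ₀) ∈ Subgroup.closure ({ρ₀, ρ₁', ρ₂} : Set (Equiv.Perm (Fin 9))) :=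
      mul_mem (mul_mem (mul_mem (mul_mem (mul_mem (mul_mem (mul_mem (mul_mem (mul_mem (br1p) br2) br1p) br0) br1p) br0) br1p) br2) br1p) br0
    have heq : (ρneg * ρ₀ * ρ₁' * ρ₀ * ρneg * ρ₁' * ρ₀ * ρneg * ρ₁' * ρ₀) = (ρ₁' * ρ₂ * ρ₁' * ρ₀ * ρ₁' * ρ₀ * ρ₁' * ρ₂ * ρ₁' * ρ₀) := by
      rw [h0, h2, hm1, h1']; decide
    have hmem : (ρneg * ρ₀ * ρ₁' * ρ₀ * ρneg * ρ₁' * ρ₀ * ρneg * ρ₁' * ρ₀) ∈ Subgroup.closure ({ρneg, ρ₀, ρ₁'} : Set (Equiv.Perm (Fin 9))) ⊓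
        Subgroup.closure ({ρ₀, ρ₁', ρ₂} : Set (Equiv.Perm (Fin 9))) :=
      ⟨hga, heq ▸ hgb⟩
    rw [hcontra] at hmem
    set τ : Equiv.Perm (Fin 9) := Equiv.swap 1 8 * Equiv.swap 2 5 * Equiv.swap 3 4 with hτ
    have hcent : Subgroup.closure ({ρ₀, ρ₁'} : Set (Equiv.Perm (Fin 9))) ≤
        Subgroup.centralizer {τ} := by
      rw [Subgroup.closure_le]
      rintro x hx
      simp only [Set.mem_insert_iff, Set.mem_singleton_iff] at hx
      rw [SetLike.mem_coe, Subgroup.mem_centralizer_iff]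
      rintro y rfl2
      rcases hx with rfl | rfl
      · rw [h0]; revert rfl2; rw [hτ]; simp only [Set.mem_singleton_iff]
        rintro rfl; decide
      · rw [h1']; revert rfl2; rw [hτ]; simp only [Set.mem_singleton_iff]
        rintro rfl; decide
    have := hcent hmem
    rw [Subgroup.mem_centralizer_iff] at this
    have hcomm := this τ (Set.mem_singleton τ)
    rw [hτ, hm1, h0, h1'] at hcomm
    revert hcomm
    decide
end
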